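/- (Gap analysis, Case 3: R12 ≥ R21, R13 ≤ R31, R23 ≥ R32; cyclic strategy for the cycle 1→2→3→1 needed.) Suppose the nonnegative rate tuple lies in C̲'_g and additionally R12 ≥ R21, R13 ≤ R31, R23 ≥ R32. Let R123^c = min(R12−R21, R23−R32, R31−R13). Define α32^b = (2^{2R32+1}−1)/(2h3²P), α31^b = 2^{2R32+1}(2^{2R13+1}−1)/(2h3²P), α31^c = 2^{2R32+2R13+2}(2^{2R123^c+1}−1)/(2h3²P), α31^u = 2^{2R123^c+2R32+2R13+3}(2^{2(R31−R13−R123^c)}−1)/(h3²P), α21^b = 2^{2R31+2R32+3}(2^{2R21+1}−1)/(2h2²P), α23^c = 2^{2R21+2R31+2R32+4}(2^{2R123^c+1}−1)/(2h2²P), α23^u = 2^{2R21+2R31+2R123^c+2R32+5}(2^{2(R23−R32−R123^c)}−1)/(h2²P), α12^u = 2^{2R23+2R21+2R31+5}(2^{2(R12−R21−R123^c)}−1)/(h1²P), with α23^b = (h3²/h2²)α32^b, α13^b = (h3²/h1²)α31^b, α12^b = (h2²/h1²)α21^b, ᾶ23^c = (h3²/h2²)α31^c, α12^c = (h2²/h1²)α23^c.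 Then α32^b+α31^b+α31^c+α31^u ≤ 1, α23^b+ᾶ23^c+α21^b+α23^c+α23^u ≤ 1, α13^b+α12^b+α12^c+α12^u ≤ 1, and (2^{2(R23+R13)}−1)/(h3²P) + 2^{2(R13+R23)}(2^{2R12}−1)/(h2²P) + 2^{2(R13+R23+R12)}(2^{2(R31−R13−R123^c)}−1)/(h1²P) ≤ 1. -/

import Mathlib

noncomputable def Cg (x : ℝ) : ℝ := (1 / 2) * Real.logb 2 (1 + x)

/-!
Multiplied by `h_k² P`, each power fraction is a difference `2^x' - 2^x` of powers of two whose
exponents are partial sums of the rates, so each budget telescopes, up to gaps that have the right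
sign, to a single power `2^(2r + 2c)`; the matching constraint `r ≤ C(x) - c` of the region says
exactly that this power is at most `1 + x`. The three relay terms are bounded one at a time in
the same way. The one exponent no single constraint controls is
`2 (R12 + R23 + R31 - R123c)`: according to which term realises the minimum `R123c`, it reduces to
the exponent of the constraint on `R21 + R31 + R23`, on `R12 + R31 + R32`, or on `R13 + R23 + R12`.
-/

lemma two_rpow_le_one_add_of_le_two_mul_Cg {x y : ℝ} (hx : 0 < 1 + x) (h : y ≤ 2 * Cg x) :
    (2:ℝ) ^ y ≤ 1 + x :=
  (Real.le_logb_iff_rpow_le one_lt_two hx).1 (by unfold Cg at h; linarith)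

lemma sq_abs_add_abs_le_four_mul_sq {a b : ℝ} (h : b ^ 2 ≤ a ^ 2) : (|a| + |b|) ^ 2 ≤ 4 * a ^ 2 := by
  have hab : |b| ≤ |a| := sq_le_sq.mp h
  nlinarith [abs_nonneg b, sq_abs a]

lemma two_rpow_mul_two_rpow_sub_one (x y : ℝ) :
    (2:ℝ) ^ x * ((2:ℝ) ^ y - 1) = (2:ℝ) ^ (x + y) - (2:ℝ) ^ x := by
  rw [mul_sub, mul_one, Real.rpow_add two_pos]

lemma user3_power_le_one {s P R13 R31 R32 Rc : ℝ} (hs : 0 < s) (hP : 0 < P)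
    (hG : R31 + R32 ≤ Cg (s * P) - 2) :
    ((2:ℝ) ^ (2 * R32 + 1) - 1) / (2 * s * P)
      + (2:ℝ) ^ (2 * R32 + 1) * ((2:ℝ) ^ (2 * R13 + 1) - 1) / (2 * s * P)
      + (2:ℝ) ^ (2 * R32 + 2 * R13 + 2) * ((2:ℝ) ^ (2 * Rc + 1) - 1) / (2 * s * P)
      + (2:ℝ) ^ (2 * Rc + 2 * R32 + 2 * R13 + 3) * ((2:ℝ) ^ (2 * (R31 - R13 - Rc)) - 1) / (s * P)
      ≤ 1 := by
  have hsP : 0 < s * P := mul_pos hs hP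
  have hG' : (2:ℝ) ^ (2 * (R31 + R32) + 4) ≤ 1 + s * P :=
    two_rpow_le_one_add_of_le_two_mul_Cg (by linarith) (by linarith)
  calc _ = ((2:ℝ) ^ (2 * (R31 + R32) + 4) - (2:ℝ) ^ (2 * (Rc + R32 + R13) + 3) - 1)
        / (2 * (s * P)) := by
        simp only [mul_add, mul_sub, Real.rpow_add two_pos, Real.rpow_sub two_pos,
          Real.rpow_one, Real.rpow_ofNat]
        field_simp
        ring
    _ ≤ 1 := by
        rw [div_le_one (by positivity)]
        linarith [Real.rpow_pos_of_pos two_pos (2 * (Rc + R32 + R13) + 3)]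

lemma user2_power_le_one {s2 s3 P u R13 R21 R23 R31 R32 Rc : ℝ} (hs2 : 0 < s2) (hs3 : 0 < s3)
    (hP : 0 < P) (h13 : R13 ≤ R31) (h21 : 0 ≤ R21) (h31 : 0 ≤ R31) (hu0 : 0 ≤ u)
    (hu : u ≤ 4 * (s2 * P)) (hG : R21 + R31 + R23 ≤ Cg u - 7 / 2) :
    s3 / s2 * (((2:ℝ) ^ (2 * R32 + 1) - 1) / (2 * s3 * P))
      + s3 / s2 * ((2:ℝ) ^ (2 * R32 + 2 * R13 + 2) * ((2:ℝ) ^ (2 * Rc + 1) - 1) / (2 * s3 * P))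
      + (2:ℝ) ^ (2 * R31 + 2 * R32 + 3) * ((2:ℝ) ^ (2 * R21 + 1) - 1) / (2 * s2 * P)
      + (2:ℝ) ^ (2 * R21 + 2 * R31 + 2 * R32 + 4) * ((2:ℝ) ^ (2 * Rc + 1) - 1) / (2 * s2 * P)
      + (2:ℝ) ^ (2 * R21 + 2 * R31 + 2 * Rc + 2 * R32 + 5)
          * ((2:ℝ) ^ (2 * (R23 - R32 - Rc)) - 1) / (s2 * P)
      ≤ 1 := by
  have hG' : (2:ℝ) ^ (2 * (R21 + R31 + R23) + 7) ≤ 1 + u :=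
    two_rpow_le_one_add_of_le_two_mul_Cg (by linarith) (by linarith)
  have hgap1 : (2:ℝ) ^ (2 * R32 + 2) ≤ 2 ^ (2 * (R31 + R32) + 4) :=
    Real.rpow_le_rpow_of_exponent_le one_le_two (by linarith)
  have hgap2 : (2:ℝ) ^ (2 * (R13 + R32 + Rc) + 4) ≤ 2 ^ (2 * (R21 + R31 + R32 + Rc) + 6) :=
    Real.rpow_le_rpow_of_exponent_le one_le_two (by linarith)
  calc _ = ((2:ℝ) ^ (2 * (R21 + R31 + R23) + 7) - 2 ^ (2 * (R21 + R31 + R32 + Rc) + 6)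
        + 2 ^ (2 * (R13 + R32 + Rc) + 4) - 2 ^ (2 * (R31 + R32) + 4)
        + 2 ^ (2 * R32 + 2) - 2 ^ (2 * (R13 + R32) + 3) - 2) / (4 * (s2 * P)) := by
        simp only [mul_add, mul_sub, Real.rpow_add two_pos, Real.rpow_sub two_pos,
          Real.rpow_one, Real.rpow_ofNat]
        field_simp
        ring
    _ ≤ 1 := by
        rw [div_le_one (by positivity)]
        linarith [Real.rpow_pos_of_pos two_pos (2 * (R13 + R32) + 3)]

lemma user1_power_le_one {s1 s2 s3 P R12 R13 R21 R23 R31 R32 Rc : ℝ} (hs1 : 0 < s1)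
    (hs2 : 0 < s2) (hs3 : 0 < s3) (hP : 0 < P) (hs21 : s2 ≤ s1) (h13 : R13 ≤ R31)
    (h32 : 0 ≤ R32) (hRc : Rc ≤ R23 - R32)
    (hK : (2:ℝ) ^ (2 * (R12 + R23 + R31 - Rc) + 6) ≤ 1 + s1 * P + s2 * P) :
    s3 / s1 * ((2:ℝ) ^ (2 * R32 + 1) * ((2:ℝ) ^ (2 * R13 + 1) - 1) / (2 * s3 * P))
      + s2 / s1 * ((2:ℝ) ^ (2 * R31 + 2 * R32 + 3) * ((2:ℝ) ^ (2 * R21 + 1) - 1) / (2 * s2 * P))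
      + s2 / s1 * ((2:ℝ) ^ (2 * R21 + 2 * R31 + 2 * R32 + 4)
          * ((2:ℝ) ^ (2 * Rc + 1) - 1) / (2 * s2 * P))
      + (2:ℝ) ^ (2 * R23 + 2 * R21 + 2 * R31 + 5)
          * ((2:ℝ) ^ (2 * (R12 - R21 - Rc)) - 1) / (s1 * P)
      ≤ 1 := by
  have hgap1 : (2:ℝ) ^ (2 * (R21 + R31 + R32 + Rc) + 5) ≤ 2 ^ (2 * (R21 + R23 + R31) + 6) :=
    Real.rpow_le_rpow_of_exponent_le one_le_two (by linarith)
  have hgap2 : (2:ℝ) ^ (2 * (R13 + R32) + 2) ≤ 2 ^ (2 * (R31 + R32) + 3) :=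
    Real.rpow_le_rpow_of_exponent_le one_le_two (by linarith)
  have hone : (1:ℝ) ≤ 2 ^ (2 * R32 + 1) := Real.one_le_rpow one_le_two (by linarith)
  calc _ = ((2:ℝ) ^ (2 * (R12 + R23 + R31 - Rc) + 6) - 2 ^ (2 * (R21 + R23 + R31) + 6)
        + 2 ^ (2 * (R21 + R31 + R32 + Rc) + 5) - 2 ^ (2 * (R31 + R32) + 3)
        + 2 ^ (2 * (R13 + R32) + 2) - 2 ^ (2 * R32 + 1)) / (2 * (s1 * P)) := by
        simp only [mul_add, mul_sub, Real.rpow_add two_pos, Real.rpow_sub two_pos,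
          Real.rpow_one, Real.rpow_ofNat]
        field_simp
        ring
    _ ≤ 1 := by
        rw [div_le_one (by positivity)]
        linarith [mul_le_mul_of_nonneg_right hs21 hP.le]

lemma two_rpow_cycle_le {t1 t2 t3 u R12 R13 R21 R23 R31 R32 Rc : ℝ}
    (hRc : Rc = min (R12 - R21) (min (R23 - R32) (R31 - R13)))
    (ht3 : 0 ≤ t3) (ht32 : t3 ≤ t2) (ht21 : t2 ≤ t1) (hu0 : 0 ≤ u) (hu : u ≤ 4 * t2)
    (hG4 : R13 + R23 + R12 ≤ Cg (t2 + t3) - 3) (hG5 : R12 + R31 + R32 ≤ Cg (t1 + t2) - 3)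
    (hG7 : R21 + R31 + R23 ≤ Cg u - 7 / 2) :
    (2:ℝ) ^ (2 * (R12 + R23 + R31 - Rc) + 6) ≤ 1 + t1 + t2 := by
  rcases min_choice (R12 - R21) (min (R23 - R32) (R31 - R13)) with h | h <;> rw [h] at hRc
  · have hG : (2:ℝ) ^ (2 * (R12 + R23 + R31 - Rc) + 6 + 1) ≤ 1 + u :=
      two_rpow_le_one_add_of_le_two_mul_Cg (by linarith) (by linarith)
    rw [Real.rpow_add_one two_ne_zero] at hG
    linarith
  rcases min_choice (R23 - R32) (R31 - R13) with h' | h' <;> rw [h'] at hRc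
  · have hG : (2:ℝ) ^ (2 * (R12 + R23 + R31 - Rc) + 6) ≤ 1 + (t1 + t2) :=
      two_rpow_le_one_add_of_le_two_mul_Cg (by linarith) (by linarith)
    linarith
  · have hG : (2:ℝ) ^ (2 * (R12 + R23 + R31 - Rc) + 6) ≤ 1 + (t2 + t3) :=
      two_rpow_le_one_add_of_le_two_mul_Cg (by linarith) (by linarith)
    linarith

lemma relay_power_le_one {t1 t2 t3 R12 R13 R23 R31 Rc : ℝ} (ht3 : 0 < t3) (ht32 : t3 ≤ t2)
    (ht21 : t2 ≤ t1) (h12 : 0 ≤ R12) (h13 : 0 ≤ R13) (h23 : 0 ≤ R23)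
    (hG2 : R13 + R23 ≤ Cg t3 - 2) (hG4 : R13 + R23 + R12 ≤ Cg (t2 + t3) - 3)
    (hK : (2:ℝ) ^ (2 * (R12 + R23 + R31 - Rc) + 6) ≤ 1 + t1 + t2) :
    ((2:ℝ) ^ (2 * (R23 + R13)) - 1) / t3
      + (2:ℝ) ^ (2 * (R13 + R23)) * ((2:ℝ) ^ (2 * R12) - 1) / t2
      + (2:ℝ) ^ (2 * (R13 + R23 + R12)) * ((2:ℝ) ^ (2 * (R31 - R13 - Rc)) - 1) / t1 ≤ 1 := by
  have hG2' : (2:ℝ) ^ (2 * (R23 + R13)) * 2 ^ (4:ℝ) ≤ 1 + t3 := by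
    rw [← Real.rpow_add two_pos]
    exact two_rpow_le_one_add_of_le_two_mul_Cg (by linarith) (by linarith)
  have hG4' : (2:ℝ) ^ (2 * (R13 + R23) + 2 * R12) * 2 ^ (6:ℝ) ≤ 1 + (t2 + t3) := by
    rw [← Real.rpow_add two_pos]
    exact two_rpow_le_one_add_of_le_two_mul_Cg (by linarith) (by linarith)
  rw [Real.rpow_add two_pos] at hK
  norm_num at hG2' hG4' hK
  have hone : (1:ℝ) ≤ 2 ^ (2 * (R13 + R23)) := Real.one_le_rpow one_le_two (by linarith)
  have hone' : (1:ℝ) ≤ 2 ^ (2 * (R13 + R23 + R12)) := Real.one_le_rpow one_le_two (by linarith)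
  have hT1 : ((2:ℝ) ^ (2 * (R23 + R13)) - 1) / t3 ≤ 1 / 16 := by
    rw [div_le_iff₀ ht3]; linarith
  have hT2 : (2:ℝ) ^ (2 * (R13 + R23)) * ((2:ℝ) ^ (2 * R12) - 1) / t2 ≤ 1 / 32 := by
    rw [div_le_iff₀ (by linarith), two_rpow_mul_two_rpow_sub_one]; linarith
  have hT3 : (2:ℝ) ^ (2 * (R13 + R23 + R12)) * ((2:ℝ) ^ (2 * (R31 - R13 - Rc)) - 1) / t1
      ≤ 1 / 32 := by
    rw [div_le_iff₀ (by linarith), two_rpow_mul_two_rpow_sub_one,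
      show 2 * (R13 + R23 + R12) + 2 * (R31 - R13 - Rc) = 2 * (R12 + R23 + R31 - Rc) by ring]
    linarith
  linarith

theorem stmt_13_general
    (P h1 h2 h3 : ℝ) (hP : 0 < P)
    (hh12 : h2 ^ 2 ≤ h1 ^ 2) (hh23 : h3 ^ 2 ≤ h2 ^ 2) (hh3 : 0 < h3 ^ 2)
    (R12 R13 R21 R23 R31 R32 : ℝ)
    (hr12 : 0 ≤ R12) (hr13 : 0 ≤ R13) (hr21 : 0 ≤ R21)
    (hr23 : 0 ≤ R23) (hr31 : 0 ≤ R31) (hr32 : 0 ≤ R32)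
    (hG1 : R31 + R32 ≤ Cg (h3 ^ 2 * P) - 2)
    (hG2 : R13 + R23 ≤ Cg (h3 ^ 2 * P) - 2)
    (hG4 : R13 + R23 + R12 ≤ Cg (h2 ^ 2 * P + h3 ^ 2 * P) - 3)
    (hG5 : R12 + R31 + R32 ≤ Cg (h1 ^ 2 * P + h2 ^ 2 * P) - 3)
    (hG7 : R21 + R31 + R23 ≤ Cg ((|h2| + |h3|) ^ 2 * P) - 7 / 2)
    (hc2 : R13 ≤ R31)
    (R123c : ℝ)
    (hR123c : R123c = min (R12 - R21) (min (R23 - R32) (R31 - R13)))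
    (a32b a31b a31c a31u a21b a23c a23u a12u a23b a13b a12b at23c a12c : ℝ)
    (ha32b : a32b = ((2:ℝ) ^ (2 * R32 + 1) - 1) / (2 * h3 ^ 2 * P))
    (ha31b : a31b = (2:ℝ) ^ (2 * R32 + 1) * ((2:ℝ) ^ (2 * R13 + 1) - 1) / (2 * h3 ^ 2 * P))
    (ha31c : a31c = (2:ℝ) ^ (2 * R32 + 2 * R13 + 2) * ((2:ℝ) ^ (2 * R123c + 1) - 1) / (2 * h3 ^ 2 * P))
    (ha31u : a31u = (2:ℝ) ^ (2 * R123c + 2 * R32 + 2 * R13 + 3) * ((2:ℝ) ^ (2 * (R31 - R13 - R123c)) - 1) / (h3 ^ 2 * P))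
    (ha21b : a21b = (2:ℝ) ^ (2 * R31 + 2 * R32 + 3) * ((2:ℝ) ^ (2 * R21 + 1) - 1) / (2 * h2 ^ 2 * P))
    (ha23c : a23c = (2:ℝ) ^ (2 * R21 + 2 * R31 + 2 * R32 + 4) * ((2:ℝ) ^ (2 * R123c + 1) - 1) / (2 * h2 ^ 2 * P))
    (ha23u : a23u = (2:ℝ) ^ (2 * R21 + 2 * R31 + 2 * R123c + 2 * R32 + 5) * ((2:ℝ) ^ (2 * (R23 - R32 - R123c)) - 1) / (h2 ^ 2 * P))
    (ha12u : a12u = (2:ℝ) ^ (2 * R23 + 2 * R21 + 2 * R31 + 5) * ((2:ℝ) ^ (2 * (R12 - R21 - R123c)) - 1) / (h1 ^ 2 * P))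
    (ha23b : a23b = h3 ^ 2 / h2 ^ 2 * a32b)
    (ha13b : a13b = h3 ^ 2 / h1 ^ 2 * a31b)
    (ha12b : a12b = h2 ^ 2 / h1 ^ 2 * a21b)
    (hat23c : at23c = h3 ^ 2 / h2 ^ 2 * a31c)
    (ha12c : a12c = h2 ^ 2 / h1 ^ 2 * a23c) :
    a32b + a31b + a31c + a31u ≤ 1 ∧
    a23b + at23c + a21b + a23c + a23u ≤ 1 ∧
    a13b + a12b + a12c + a12u ≤ 1 ∧
    ((2:ℝ) ^ (2 * (R23 + R13)) - 1) / (h3 ^ 2 * P)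
      + (2:ℝ) ^ (2 * (R13 + R23)) * ((2:ℝ) ^ (2 * R12) - 1) / (h2 ^ 2 * P)
      + (2:ℝ) ^ (2 * (R13 + R23 + R12)) * ((2:ℝ) ^ (2 * (R31 - R13 - R123c)) - 1) / (h1 ^ 2 * P) ≤ 1 := by
  have hh2 : 0 < h2 ^ 2 := hh3.trans_le hh23
  have hh1 : 0 < h1 ^ 2 := hh2.trans_le hh12
  have ht32 : h3 ^ 2 * P ≤ h2 ^ 2 * P := mul_le_mul_of_nonneg_right hh23 hP.le
  have ht21 : h2 ^ 2 * P ≤ h1 ^ 2 * P := mul_le_mul_of_nonneg_right hh12 hP.le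
  have hu : (|h2| + |h3|) ^ 2 * P ≤ 4 * (h2 ^ 2 * P) := by
    rw [← mul_assoc]
    exact mul_le_mul_of_nonneg_right (sq_abs_add_abs_le_four_mul_sq hh23) hP.le
  have hRc : R123c ≤ R23 - R32 := hR123c ▸ (min_le_right _ _).trans (min_le_left _ _)
  have hK := two_rpow_cycle_le hR123c (mul_pos hh3 hP).le ht32 ht21 (by positivity) hu hG4 hG5 hG7
  subst a32b a31b a31c a31u a21b a23c a23u a12u a23b a13b a12b at23c a12c
  exact ⟨user3_power_le_one hh3 hP hG1,
    user2_power_le_one hh2 hh3 hP hc2 hr21 hr31 (by positivity) hu hG7,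
    user1_power_le_one hh1 hh2 hh3 hP hh12 hc2 hr32 hRc hK,
    relay_power_le_one (mul_pos hh3 hP) ht32 ht21 hr12 hr13 hr23 hG2 hG4 hK⟩

theorem stmt_13
    (P h1 h2 h3 : ℝ) (hP : 0 < P)
    (hh12 : h2 ^ 2 ≤ h1 ^ 2) (hh23 : h3 ^ 2 ≤ h2 ^ 2) (hh3 : 0 < h3 ^ 2)
    (R12 R13 R21 R23 R31 R32 : ℝ)
    (hr12 : 0 ≤ R12) (hr13 : 0 ≤ R13) (hr21 : 0 ≤ R21)
    (hr23 : 0 ≤ R23) (hr31 : 0 ≤ R31) (hr32 : 0 ≤ R32)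
    (hG1 : R31 + R32 ≤ Cg (h3 ^ 2 * P) - 2)
    (hG2 : R13 + R23 ≤ Cg (h3 ^ 2 * P) - 2)
    (hG3 : R12 + R13 + R32 ≤ Cg (h2 ^ 2 * P + h3 ^ 2 * P) - 3)
    (hG4 : R13 + R23 + R12 ≤ Cg (h2 ^ 2 * P + h3 ^ 2 * P) - 3)
    (hG5 : R12 + R31 + R32 ≤ Cg (h1 ^ 2 * P + h2 ^ 2 * P) - 3)
    (hG6 : R13 + R23 + R21 ≤ Cg (h1 ^ 2 * P + h3 ^ 2 * P) - 3)
    (hG7 : R21 + R31 + R23 ≤ Cg ((|h2| + |h3|) ^ 2 * P) - 7 / 2)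
    (hG8 : R21 + R31 + R32 ≤ Cg ((|h2| + |h3|) ^ 2 * P) - 7 / 2)
    (hc1 : R21 ≤ R12) (hc2 : R13 ≤ R31) (hc3 : R32 ≤ R23)
    (R123c : ℝ)
    (hR123c : R123c = min (R12 - R21) (min (R23 - R32) (R31 - R13)))
    (a32b a31b a31c a31u a21b a23c a23u a12u a23b a13b a12b at23c a12c : ℝ)
    (ha32b : a32b = ((2:ℝ) ^ (2 * R32 + 1) - 1) / (2 * h3 ^ 2 * P))
    (ha31b : a31b = (2:ℝ) ^ (2 * R32 + 1) * ((2:ℝ) ^ (2 * R13 + 1) - 1) / (2 * h3 ^ 2 * P))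
    (ha31c : a31c = (2:ℝ) ^ (2 * R32 + 2 * R13 + 2) * ((2:ℝ) ^ (2 * R123c + 1) - 1) / (2 * h3 ^ 2 * P))
    (ha31u : a31u = (2:ℝ) ^ (2 * R123c + 2 * R32 + 2 * R13 + 3) * ((2:ℝ) ^ (2 * (R31 - R13 - R123c)) - 1) / (h3 ^ 2 * P))
    (ha21b : a21b = (2:ℝ) ^ (2 * R31 + 2 * R32 + 3) * ((2:ℝ) ^ (2 * R21 + 1) - 1) / (2 * h2 ^ 2 * P))
    (ha23c : a23c = (2:ℝ) ^ (2 * R21 + 2 * R31 + 2 * R32 + 4) * ((2:ℝ) ^ (2 * R123c + 1) - 1) / (2 * h2 ^ 2 * P))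
    (ha23u : a23u = (2:ℝ) ^ (2 * R21 + 2 * R31 + 2 * R123c + 2 * R32 + 5) * ((2:ℝ) ^ (2 * (R23 - R32 - R123c)) - 1) / (h2 ^ 2 * P))
    (ha12u : a12u = (2:ℝ) ^ (2 * R23 + 2 * R21 + 2 * R31 + 5) * ((2:ℝ) ^ (2 * (R12 - R21 - R123c)) - 1) / (h1 ^ 2 * P))
    (ha23b : a23b = h3 ^ 2 / h2 ^ 2 * a32b)
    (ha13b : a13b = h3 ^ 2 / h1 ^ 2 * a31b)
    (ha12b : a12b = h2 ^ 2 / h1 ^ 2 * a21b)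
    (hat23c : at23c = h3 ^ 2 / h2 ^ 2 * a31c)
    (ha12c : a12c = h2 ^ 2 / h1 ^ 2 * a23c) :
    a32b + a31b + a31c + a31u ≤ 1 ∧
    a23b + at23c + a21b + a23c + a23u ≤ 1 ∧
    a13b + a12b + a12c + a12u ≤ 1 ∧
    ((2:ℝ) ^ (2 * (R23 + R13)) - 1) / (h3 ^ 2 * P)
      + (2:ℝ) ^ (2 * (R13 + R23)) * ((2:ℝ) ^ (2 * R12) - 1) / (h2 ^ 2 * P)
      + (2:ℝ) ^ (2 * (R13 + R23 + R12)) * ((2:ℝ) ^ (2 * (R31 - R13 - R123c)) - 1) / (h1 ^ 2 * P) ≤ 1 :=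
  stmt_13_general P h1 h2 h3 hP hh12 hh23 hh3 R12 R13 R21 R23 R31 R32 hr12 hr13 hr21 hr23 hr31 hr32
    hG1 hG2 hG4 hG5 hG7 hc2 R123c hR123c a32b a31b a31c a31u a21b a23c a23u a12u a23b a13b a12b
    at23c a12c ha32b ha31b ha31c ha31u ha21b ha23c ha23u ha12u ha23b ha13b ha12b hat23c ha12c
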